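/- arXiv:2408.13070 — 4 statements merged into one kernel-verified Lean document; each statement's English description precedes it below -/
import Mathlib

section
/- The class CF-TR is closed under taking direct products: if G₁ and G₂ are groups in CF-TR, then the direct product G₁ × G₂ is in CF-TR. -/
/-- Evaluation of a word over `A ⊕ A` in the free group. -/
def evalWord {A : Type} (w : List (A ⊕ A)) : FreeGroup A :=
  (w.map (Sum.elim (fun a => FreeGroup.of a) (fun a => (FreeGroup.of a)⁻¹))).prod

/-- The loop language of the complete inverse graph `V` at the vertex `v`. -/
def loopLang (A V : Type) [MulAction (FreeGroup A) V] (v : V) : Language (A ⊕ A) :=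
  {w | evalWord w • v = v}

/-- The kernel `K(V) = {g | ∀ v, g • v = v}` of the action of `FreeGroup A` on `V`. -/
def actionKernel (A V : Type) [MulAction (FreeGroup A) V] : Subgroup (FreeGroup A) where
  carrier := {g | ∀ v : V, g • v = v}
  one_mem' := fun v => one_smul _ v
  mul_mem' := by
    intro a b ha hb v
    rw [mul_smul, hb, ha]
  inv_mem' := by
    intro a ha v
    conv_lhs => rw [← ha v]
    rw [inv_smul_smul]

instance actionKernel_normal (A V : Type) [MulAction (FreeGroup A) V] :
    (actionKernel A V).Normal := by
  constructor
  intro n hn g v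
  rw [mul_smul, mul_smul, hn (g⁻¹ • v), smul_inv_smul]

instance iInf_actionKernel_normal (A : Type) {k : ℕ} (V : Fin k → Type)
    [∀ i, MulAction (FreeGroup A) (V i)] :
    (⨅ i, actionKernel A (V i)).Normal := by
  constructor
  intro n hn g
  rw [Subgroup.mem_iInf] at hn ⊢
  intro i
  exact (actionKernel_normal A (V i)).conj_mem n (hn i) g

/-- A group is in the class CF-TR if it is isomorphic to the transition group
`FreeGroup A ⧸ (⨅ i, K(Vᵢ))` of a finite family of nonempty, connected (pretransitive),
complete, context-free inverse graphs over a finite alphabet `A`. -/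
def IsCFTR (G : Type) [Group G] : Prop :=
  ∃ (A : Type) (_ : Finite A) (k : ℕ) (V : Fin k → Type)
    (inst : ∀ i, MulAction (FreeGroup A) (V i)),
    letI := inst
    (∀ i, Nonempty (V i)) ∧
    (∀ i, MulAction.IsPretransitive (FreeGroup A) (V i)) ∧
    (∀ i, ∃ v₀ : V i, (loopLang A (V i) v₀).IsContextFree) ∧
    Nonempty (G ≃* (FreeGroup A ⧸ ⨅ i, actionKernel A (V i)))

/-!
Both transition groups are realised over the joint alphabet `A₁ ⊕ A₂`: each graph of the first
family reads the letters of `A₂` as loops, i.e. the free group acts through the homomorphism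
`F(A₁ ⊕ A₂) → F(A₁)` erasing `A₂`, and symmetrically for the second family. This homomorphism is
onto, so connectedness survives; the new loop language is the preimage of the old one under the
map of words erasing the letters of `A₂`, hence context-free; and the intersection of all the
kernels is the kernel of `F(A₁ ⊕ A₂) → F(A₁)/N₁ × F(A₂)/N₂`, where `Nᵢ` is the intersection of
the kernels of the `i`-th family, and this map is onto.
-/

namespace ContextFreeGrammar

theorem Derives.flatMap {T T' : Type*} {g : ContextFreeGrammar T} {g' : ContextFreeGrammar T'}
    (σ : Symbol T g.NT → List (Symbol T' g'.NT))
    (hσ : ∀ r ∈ g.rules, g'.Derives (σ (.nonterminal r.input)) (r.output.flatMap σ))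
    {u v : List (Symbol T g.NT)} (h : g.Derives u v) :
    g'.Derives (u.flatMap σ) (v.flatMap σ) := by
  induction h with
  | refl => rfl
  | tail _ step ih =>
    obtain ⟨r, hr, hrw⟩ := step
    obtain ⟨p, q, rfl, rfl⟩ := hrw.exists_parts
    simp only [List.flatMap_append, List.flatMap_singleton, List.append_assoc] at ih ⊢
    exact ih.trans (((hσ r hr).append_right _).append_left _)

inductive PreimageNT (N T : Type) where
  | start
  | pad
  | letter (t : T)
  | old (n : N)

open PreimageNT

section Preimage

variable {T N : Type} {T' : Type*} (f : T' → Option T)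

/- The grammar of `{w | w.filterMap f ∈ g.language}`: each terminal `t` of `g` becomes
`letter t` followed by `pad`, where `letter t` produces one letter of `f ⁻¹' {some t}` and `pad`
any word of letters erased by `f`; `start` adds a `pad` in front. `preimageProj` maps sentential
forms back to `g`. -/

def preimageLift : Symbol T N → List (Symbol T' (PreimageNT N T))
  | .terminal t => [.nonterminal (letter t), .nonterminal pad]
  | .nonterminal n => [.nonterminal (old n)]

def preimageProj (n₀ : N) : Symbol T' (PreimageNT N T) → List (Symbol T N)
  | .terminal t' => ((f t').map .terminal).toList
  | .nonterminal start => [.nonterminal n₀]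
  | .nonterminal pad => []
  | .nonterminal (letter t) => [.terminal t]
  | .nonterminal (old n) => [.nonterminal n]

def preimageTerminalRule (t' : T') : ContextFreeRule T' (PreimageNT N T) :=
  match f t' with
  | none => ⟨pad, [.terminal t', .nonterminal pad]⟩
  | some t => ⟨letter t, [.terminal t']⟩

def preimageRules (g : ContextFreeGrammar T) : Set (ContextFreeRule T' (PreimageNT g.NT T)) :=
  {⟨start, [.nonterminal pad, .nonterminal (old g.initial)]⟩, ⟨pad, []⟩} ∪
    Set.range (preimageTerminalRule f) ∪
    (fun r : ContextFreeRule T g.NT => ⟨old r.input, r.output.flatMap preimageLift⟩) '' g.rules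

theorem preimageRules_finite (g : ContextFreeGrammar T) [Finite T'] :
    (preimageRules f g).Finite :=
  ((Set.toFinite _).union (Set.finite_range _)).union (g.rules.finite_toSet.image _)

noncomputable abbrev preimageFilterMap (g : ContextFreeGrammar T) [Finite T'] :
    ContextFreeGrammar T' where
  NT := PreimageNT g.NT T
  initial := start
  rules := (preimageRules_finite f g).toFinset

theorem flatMap_preimageLift_flatMap_preimageProj (n₀ : N) (α : List (Symbol T N)) :
    (α.flatMap (preimageLift (T' := T'))).flatMap (preimageProj f n₀) = α := by
  induction α with
  | nil => rfl
  | cons s α ih => cases s <;> simp [preimageLift, preimageProj, ih]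

theorem map_terminal_flatMap_preimageProj (n₀ : N) (w : List T') :
    (w.map .terminal).flatMap (preimageProj f n₀) = (w.filterMap f).map .terminal := by
  induction w with
  | nil => rfl
  | cons x w ih => cases hx : f x <;> simp [preimageProj, hx, ih]

variable (g : ContextFreeGrammar T)

theorem derives_preimageProj_of_mem_preimageRules {r : ContextFreeRule T' (PreimageNT g.NT T)}
    (hr : r ∈ preimageRules f g) :
    g.Derives (preimageProj f g.initial (.nonterminal r.input))
      (r.output.flatMap (preimageProj f g.initial)) := by
  rcases hr with ((rfl | rfl) | ⟨t', rfl⟩) | ⟨r, hr, rfl⟩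
  · rfl
  · rfl
  · cases hf : f t' <;> simp [preimageTerminalRule, preimageProj, hf] <;> rfl
  · rw [flatMap_preimageLift_flatMap_preimageProj]
    exact Produces.single ⟨r, hr, ContextFreeRule.Rewrites.input_output⟩

variable [Finite T']

theorem mem_preimageFilterMap_rules {r : ContextFreeRule T' (PreimageNT g.NT T)} :
    r ∈ (g.preimageFilterMap f).rules ↔ r ∈ preimageRules f g :=
  Set.Finite.mem_toFinset _

theorem Derives.of_preimageFilterMap {u v : List (Symbol T' (PreimageNT g.NT T))}
    (h : (g.preimageFilterMap f).Derives u v) :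
    g.Derives (u.flatMap (preimageProj f g.initial)) (v.flatMap (preimageProj f g.initial)) :=
  h.flatMap _ fun _ hr =>
    derives_preimageProj_of_mem_preimageRules f g ((mem_preimageFilterMap_rules f g).mp hr)

theorem Derives.preimageFilterMap {u v : List (Symbol T g.NT)} (h : g.Derives u v) :
    (g.preimageFilterMap f).Derives (u.flatMap preimageLift) (v.flatMap preimageLift) :=
  h.flatMap _ fun r hr => Produces.single
    ⟨⟨old r.input, r.output.flatMap preimageLift⟩,
      (mem_preimageFilterMap_rules f g).mpr (Or.inr ⟨r, hr, rfl⟩),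
      ContextFreeRule.Rewrites.input_output⟩

theorem preimageFilterMap_derives_pad_cons (w : List T') :
    (g.preimageFilterMap f).Derives
      (.nonterminal pad :: ((w.filterMap f).map .terminal).flatMap preimageLift)
      (w.map .terminal) := by
  induction w with
  | nil =>
    exact Produces.single ⟨⟨pad, []⟩,
      (mem_preimageFilterMap_rules f g).mpr (Or.inl (Or.inl (Or.inr rfl))),
      ContextFreeRule.Rewrites.input_output⟩
  | cons x w ih =>
    have hx := (mem_preimageFilterMap_rules f g).mpr (Or.inl (Or.inr ⟨x, rfl⟩))
    refine Derives.trans ?_ (ih.append_left [.terminal x])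
    cases hf : f x with
    | none =>
      simp only [preimageTerminalRule, hf] at hx
      simp only [List.filterMap_cons, hf]
      exact Produces.single ⟨_, hx, ContextFreeRule.Rewrites.head _⟩
    | some t =>
      simp only [preimageTerminalRule, hf] at hx
      have hpad := (mem_preimageFilterMap_rules f g).mpr (Or.inl (Or.inl (Or.inr rfl)))
      simp only [List.filterMap_cons, hf, List.map_cons]
      exact (Produces.single ⟨_, hpad, ContextFreeRule.Rewrites.head _⟩).trans_produces
        ⟨_, hx, ContextFreeRule.Rewrites.head _⟩

theorem language_preimageFilterMap :
    (g.preimageFilterMap f).language = {w | w.filterMap f ∈ g.language} := by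
  ext w
  constructor
  · intro hw
    have h := hw.of_preimageFilterMap f g
    rw [map_terminal_flatMap_preimageProj f g.initial w] at h
    exact h
  · intro hw
    have hstart : (g.preimageFilterMap f).Produces [.nonterminal start]
        [.nonterminal pad, .nonterminal (old g.initial)] :=
      ⟨_, (mem_preimageFilterMap_rules f g).mpr (Or.inl (Or.inl (Or.inl rfl))),
        ContextFreeRule.Rewrites.input_output⟩
    exact hstart.trans_derives
      (((Derives.preimageFilterMap f g hw).append_left [.nonterminal pad]).trans
        (preimageFilterMap_derives_pad_cons f g w))

end Preimage

end ContextFreeGrammar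

theorem Language.IsContextFree.preimage_filterMap {T : Type} {T' : Type*} [Finite T']
    {L : Language T} (hL : L.IsContextFree) (f : T' → Option T) :
    Language.IsContextFree {w : List T' | w.filterMap f ∈ L} := by
  obtain ⟨g, rfl⟩ := hL
  exact ⟨g.preimageFilterMap f, g.language_preimageFilterMap f⟩

section PartialMap

variable {A B : Type}

def FreeGroup.partialMap (q : A → Option B) : FreeGroup A →* FreeGroup B :=
  FreeGroup.lift fun a => (q a).elim 1 FreeGroup.of

def partialMapLetter (q : A → Option B) : A ⊕ A → Option (B ⊕ B) :=
  Sum.elim (fun a => (q a).map Sum.inl) (fun a => (q a).map Sum.inr)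

theorem FreeGroup.partialMap_comp_map {C : Type} (q : A → Option B) (i : C → A) :
    (FreeGroup.partialMap q).comp (FreeGroup.map i) = FreeGroup.partialMap (q ∘ i) :=
  FreeGroup.ext_hom _ _ fun _ => by simp [FreeGroup.partialMap]

theorem FreeGroup.partialMap_some :
    FreeGroup.partialMap (some : A → Option A) = MonoidHom.id _ :=
  FreeGroup.ext_hom _ _ fun _ => by simp [FreeGroup.partialMap]

theorem FreeGroup.partialMap_none :
    FreeGroup.partialMap (fun _ : A => (none : Option B)) = 1 :=
  FreeGroup.ext_hom _ _ fun _ => by simp [FreeGroup.partialMap]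

theorem FreeGroup.partialMap_getLeft_prod_getRight_surjective :
    Function.Surjective ((FreeGroup.partialMap (Sum.getLeft? : A ⊕ B → Option A)).prod
      (FreeGroup.partialMap Sum.getRight?)) := by
  rintro ⟨x, y⟩
  refine ⟨FreeGroup.map Sum.inl x * FreeGroup.map Sum.inr y, ?_⟩
  simp [← MonoidHom.comp_apply, FreeGroup.partialMap_comp_map, Function.comp_def,
    FreeGroup.partialMap_some, FreeGroup.partialMap_none]

theorem evalWord_cons (x : A ⊕ A) (w : List (A ⊕ A)) :
    evalWord (x :: w) = Sum.elim FreeGroup.of (fun a => (FreeGroup.of a)⁻¹) x * evalWord w := by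
  simp [evalWord]

theorem evalWord_filterMap_partialMapLetter (q : A → Option B) (w : List (A ⊕ A)) :
    evalWord (w.filterMap (partialMapLetter q)) = FreeGroup.partialMap q (evalWord w) := by
  induction w with
  | nil => simp [evalWord]
  | cons x w ih =>
    rw [evalWord_cons, map_mul, ← ih]
    rcases x with a | a <;> cases hq : q a <;>
      simp [FreeGroup.partialMap, partialMapLetter, hq, evalWord_cons]

theorem loopLang_compHom_partialMap (q : A → Option B) {V : Type} [MulAction (FreeGroup B) V]
    (v : V) :
    (letI := MulAction.compHom V (FreeGroup.partialMap q); loopLang A V v) =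
      {w | w.filterMap (partialMapLetter q) ∈ loopLang B V v} := by
  ext w
  change FreeGroup.partialMap q (evalWord w) • v = v ↔
    evalWord (w.filterMap (partialMapLetter q)) • v = v
  rw [evalWord_filterMap_partialMapLetter]

structure ContextFreeInverseGraph (A : Type) where
  V : Type
  [act : MulAction (FreeGroup A) V]
  nonempty : Nonempty V
  pretransitive : MulAction.IsPretransitive (FreeGroup A) V
  isContextFree : ∃ v₀ : V, (loopLang A V v₀).IsContextFree

attribute [instance] ContextFreeInverseGraph.act

instance {A ι : Type} (V : ι → Type)
    [∀ i, MulAction (FreeGroup A) (V i)] : (⨅ i, actionKernel A (V i)).Normal :=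
  Subgroup.normal_iInf_normal fun _ => inferInstance

namespace ContextFreeInverseGraph

variable {A B : Type}

def comap [Finite A] (Γ : ContextFreeInverseGraph B) (q : A → Option B)
    (hq : Function.Surjective (FreeGroup.partialMap q)) : ContextFreeInverseGraph A :=
  letI := MulAction.compHom Γ.V (FreeGroup.partialMap q)
  { V := Γ.V
    nonempty := Γ.nonempty
    pretransitive := have := Γ.pretransitive; MulAction.isPretransitive_compHom hq
    isContextFree := by
      obtain ⟨v₀, hv₀⟩ := Γ.isContextFree
      exact ⟨v₀, loopLang_compHom_partialMap q v₀ ▸ hv₀.preimage_filterMap _⟩ }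

end ContextFreeInverseGraph

theorem isCFTR_iff {G : Type} [Group G] :
    IsCFTR G ↔ ∃ (A : Type) (_ : Finite A) (ι : Type) (_ : Finite ι)
      (Γ : ι → ContextFreeInverseGraph A),
      Nonempty (G ≃* FreeGroup A ⧸ ⨅ i, actionKernel A (Γ i).V) := by
  constructor
  · rintro ⟨A, hA, k, V, inst, hne, htr, hcf, he⟩
    exact ⟨A, hA, Fin k, inferInstance, fun i => ⟨V i, hne i, htr i, hcf i⟩, he⟩
  · rintro ⟨A, hA, ι, hι, Γ, ⟨e⟩⟩
    let σ := Finite.equivFin ι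
    refine ⟨A, hA, Nat.card ι, fun i => (Γ (σ.symm i)).V, fun i => (Γ (σ.symm i)).act,
      fun i => (Γ _).nonempty, fun i => (Γ _).pretransitive, fun i => (Γ _).isContextFree,
      ⟨e.trans (QuotientGroup.quotientMulEquivOfEq ?_)⟩⟩
    exact (σ.symm.iInf_comp (g := fun i => actionKernel A (Γ i).V)).symm

noncomputable def QuotientGroup.quotientInfComapEquivProd {F G₁ G₂ : Type*} [Group F] [Group G₁]
    [Group G₂] {θ₁ : F →* G₁} {θ₂ : F →* G₂} (hθ : Function.Surjective (θ₁.prod θ₂))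
    (N₁ : Subgroup G₁) (N₂ : Subgroup G₂) [N₁.Normal] [N₂.Normal] :
    F ⧸ (N₁.comap θ₁ ⊓ N₂.comap θ₂) ≃* (G₁ ⧸ N₁) × (G₂ ⧸ N₂) :=
  let φ := ((QuotientGroup.mk' N₁).comp θ₁).prod ((QuotientGroup.mk' N₂).comp θ₂)
  have hker : φ.ker = N₁.comap θ₁ ⊓ N₂.comap θ₂ := by
    rw [MonoidHom.ker_prod, ← MonoidHom.comap_ker, ← MonoidHom.comap_ker, QuotientGroup.ker_mk',
      QuotientGroup.ker_mk']
  have hφ : Function.Surjective φ :=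
    ((QuotientGroup.mk'_surjective N₁).prodMap (QuotientGroup.mk'_surjective N₂)).comp hθ
  (QuotientGroup.quotientMulEquivOfEq hker.symm).trans
    (QuotientGroup.quotientKerEquivOfSurjective φ hφ)

namespace ContextFreeInverseGraph

variable {A₁ A₂ ι₁ ι₂ : Type} [Finite A₁] [Finite A₂]

noncomputable def sumFamily (Γ₁ : ι₁ → ContextFreeInverseGraph A₁)
    (Γ₂ : ι₂ → ContextFreeInverseGraph A₂) : ι₁ ⊕ ι₂ → ContextFreeInverseGraph (A₁ ⊕ A₂) :=
  Sum.elim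
    (fun i => (Γ₁ i).comap Sum.getLeft?
      (Prod.fst_surjective.comp FreeGroup.partialMap_getLeft_prod_getRight_surjective))
    (fun i => (Γ₂ i).comap Sum.getRight?
      (Prod.snd_surjective.comp FreeGroup.partialMap_getLeft_prod_getRight_surjective))

theorem iInf_actionKernel_sumFamily (Γ₁ : ι₁ → ContextFreeInverseGraph A₁)
    (Γ₂ : ι₂ → ContextFreeInverseGraph A₂) :
    ⨅ j, actionKernel _ (sumFamily Γ₁ Γ₂ j).V =
      (⨅ i, actionKernel A₁ (Γ₁ i).V).comap (FreeGroup.partialMap Sum.getLeft?) ⊓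
        (⨅ i, actionKernel A₂ (Γ₂ i).V).comap (FreeGroup.partialMap Sum.getRight?) := by
  rw [iInf_sum, Subgroup.comap_iInf, Subgroup.comap_iInf]
  -- the kernel of an action pulled back along `θ` is the `θ`-preimage of the kernel
  rfl

end ContextFreeInverseGraph

/-- The class CF-TR is closed under taking direct products. -/
theorem stmt6 {G₁ G₂ : Type} [Group G₁] [Group G₂] (h₁ : IsCFTR G₁) (h₂ : IsCFTR G₂) :
    IsCFTR (G₁ × G₂) := by
  obtain ⟨A₁, _, ι₁, _, Γ₁, ⟨e₁⟩⟩ := isCFTR_iff.mp h₁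
  obtain ⟨A₂, _, ι₂, _, Γ₂, ⟨e₂⟩⟩ := isCFTR_iff.mp h₂
  refine isCFTR_iff.mpr ⟨A₁ ⊕ A₂, inferInstance, ι₁ ⊕ ι₂, inferInstance,
    ContextFreeInverseGraph.sumFamily Γ₁ Γ₂, ⟨(e₁.prodCongr e₂).trans ?_⟩⟩
  exact (QuotientGroup.quotientInfComapEquivProd
    FreeGroup.partialMap_getLeft_prod_getRight_surjective _ _).symm.trans
      (QuotientGroup.quotientMulEquivOfEq
        (ContextFreeInverseGraph.iInf_actionKernel_sumFamily Γ₁ Γ₂).symm)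
end PartialMap
end

section
/- Let G be a group, A a finite type, and π : FreeGroup A →* G a surjective group homomorphism. Let V₁, …, Vₖ be nonempty types with pretransitive left actions of FreeGroup A and basepoints xᵢ : Vᵢ. If the word problem of G equals the intersection of the loop languages, i.e. {w : List (A ⊕ A) | π (eval w) = 1} = ⋂ i, L(Vᵢ, xᵢ), then in fact {w | π (eval w) = 1} = ⋂ i, {w | ∀ v : Vᵢ, eval w • v = v}; equivalently the kernel of π equals ⨅ i, K(Vᵢ), so that G is isomorphic to the transition group FreeGroup A ⧸ (⨅ i, K(Vᵢ)). In particular, if moreover each L(Vᵢ, xᵢ) is a context-free language, then G is in CF-TR. -/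
/-
Since every element of `FreeGroup A` is the value of a word, the hypothesis says that
`ker π` is the intersection of the stabilizers of the basepoints `xᵢ`. A normal subgroup
contained in the stabilizer of one point of a transitive action fixes every point, because
the stabilizers of the other points are its conjugates; hence `ker π ≤ K(Vᵢ)` for each `i`,
and the reverse inclusion is trivial. The isomorphism `G ≃* FreeGroup A ⧸ ker π` then
exhibits `G` as the transition group of the family.
-/

lemma evalWord_append {A : Type} (w₁ w₂ : List (A ⊕ A)) :
    evalWord (w₁ ++ w₂) = evalWord w₁ * evalWord w₂ := by
  simp [evalWord]

lemma evalWord_surjective {A : Type} : Function.Surjective (evalWord (A := A)) := by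
  intro g
  induction g using FreeGroup.induction_on with
  | C1 => exact ⟨[], rfl⟩
  | of a => exact ⟨[Sum.inl a], by simp [evalWord]⟩
  | inv_of a _ => exact ⟨[Sum.inr a], by simp [evalWord]⟩
  | mul g h hg hh =>
    obtain ⟨w₁, rfl⟩ := hg
    obtain ⟨w₂, rfl⟩ := hh
    exact ⟨w₁ ++ w₂, evalWord_append w₁ w₂⟩

section actionKernel

variable {A V : Type} [MulAction (FreeGroup A) V]

lemma mem_actionKernel {g : FreeGroup A} : g ∈ actionKernel A V ↔ ∀ v : V, g • v = v :=
  Iff.rfl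

lemma actionKernel_le_stabilizer (x : V) :
    actionKernel A V ≤ MulAction.stabilizer (FreeGroup A) x :=
  fun _ hg => hg x

lemma Subgroup.Normal.le_actionKernel [MulAction.IsPretransitive (FreeGroup A) V]
    {N : Subgroup (FreeGroup A)} (hN : N.Normal) {x : V}
    (hx : N ≤ MulAction.stabilizer (FreeGroup A) x) : N ≤ actionKernel A V := by
  intro g hg v
  obtain ⟨h, rfl⟩ := MulAction.exists_smul_eq (FreeGroup A) x v
  have hconj : (h⁻¹ * g * h) • x = x := hx (by simpa using hN.conj_mem g hg h⁻¹)
  calc g • h • x = h • (h⁻¹ * g * h) • x := by simp only [smul_smul]; group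
    _ = h • x := by rw [hconj]

end actionKernel

lemma ker_eq_iInf_stabilizer_of_wordProblem {A G : Type} [Group G] (π : FreeGroup A →* G)
    {ι : Type} {V : ι → Type} [∀ i, MulAction (FreeGroup A) (V i)] (x : ∀ i, V i)
    (hwp : {w : List (A ⊕ A) | π (evalWord w) = 1} =
      ⋂ i, {w : List (A ⊕ A) | evalWord w • x i = x i}) :
    π.ker = ⨅ i, MulAction.stabilizer (FreeGroup A) (x i) := by
  ext g
  obtain ⟨w, rfl⟩ := evalWord_surjective g
  simpa [Subgroup.mem_iInf] using Set.ext_iff.mp hwp w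

/-- If the word problem of a group `G` (with respect to a surjection `π` from a free group)
equals the intersection of the loop languages of a finite family of connected complete
inverse graphs at chosen basepoints, then it equals the intersection of the everywhere-circuit
languages; equivalently `ker π = ⨅ i, K(Vᵢ)`, so `G` is the transition group of the family.
In particular, if each loop language is context-free then `G` is in CF-TR. -/
theorem stmt8 {A : Type} [Finite A] {G : Type} [Group G]
    (π : FreeGroup A →* G) (hπ : Function.Surjective π)
    {k : ℕ} (V : Fin k → Type) [∀ i, MulAction (FreeGroup A) (V i)]
    [∀ i, Nonempty (V i)]
    [∀ i, MulAction.IsPretransitive (FreeGroup A) (V i)]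
    (x : ∀ i, V i)
    (hwp : {w : List (A ⊕ A) | π (evalWord w) = 1} =
      ⋂ i, {w : List (A ⊕ A) | evalWord w • x i = x i}) :
    ({w : List (A ⊕ A) | π (evalWord w) = 1} =
        ⋂ i, {w : List (A ⊕ A) | ∀ v : V i, evalWord w • v = v}) ∧
    π.ker = (⨅ i, actionKernel A (V i)) ∧
    Nonempty (G ≃* (FreeGroup A ⧸ ⨅ i, actionKernel A (V i))) ∧
    ((∀ i, (loopLang A (V i) (x i)).IsContextFree) → IsCFTR G) := by
  have hstab := ker_eq_iInf_stabilizer_of_wordProblem π x hwp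
  have hker : π.ker = ⨅ i, actionKernel A (V i) :=
    le_antisymm
      (le_iInf fun i => π.normal_ker.le_actionKernel (hstab ▸ iInf_le _ i))
      (hstab ▸ iInf_mono fun i => actionKernel_le_stabilizer (x i))
  have hiso : Nonempty (G ≃* (FreeGroup A ⧸ ⨅ i, actionKernel A (V i))) :=
    ⟨(QuotientGroup.quotientKerEquivOfSurjective π hπ).symm.trans
      (QuotientGroup.quotientMulEquivOfEq hker)⟩
  refine ⟨?_, hker, hiso, fun hcf => ⟨A, inferInstance, k, V, inferInstance, inferInstance,
    inferInstance, fun i => ⟨x i, hcf i⟩, hiso⟩⟩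
  ext w
  simp only [Set.mem_ofPred_eq, Set.mem_iInter, ← MonoidHom.mem_ker, hker, Subgroup.mem_iInf,
    mem_actionKernel]
end

section
/- The subgroup of Equiv.Perm (ℤ × ZMod 2) generated by the two permutations α and β is isomorphic to ℤ × ℤ, where α (x, y) = (x + 1, y) if y = 0 and α (x, y) = (x, y) if y = 1, and β (x, y) = (x + 1, y) if y = 1 and β (x, y) = (x, y) if y = 0. -/
/-!
The translations of `ℤ × ι` that move each line `ℤ × {i}` by its own amount form a copy of
`ι → ℤ`, generated (for finite `ι`) by the unit translations of the single lines; `α` and `β`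
are exactly the unit translations of the two lines of `ℤ × ZMod 2`.
-/

/-- The permutation `a` of the graph `Ω`: shift the bottom line, fix the top line. -/
def alpha : Equiv.Perm (ℤ × ZMod 2) where
  toFun p := if p.2 = 0 then (p.1 + 1, p.2) else p
  invFun p := if p.2 = 0 then (p.1 - 1, p.2) else p
  left_inv p := by by_cases h : p.2 = 0 <;> simp [h, Prod.ext_iff]
  right_inv p := by by_cases h : p.2 = 0 <;> simp [h, Prod.ext_iff]

/-- The permutation `b` of the graph `Ω`: shift the top line, fix the bottom line. -/
def beta : Equiv.Perm (ℤ × ZMod 2) where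
  toFun p := if p.2 = 1 then (p.1 + 1, p.2) else p
  invFun p := if p.2 = 1 then (p.1 - 1, p.2) else p
  left_inv p := by by_cases h : p.2 = 1 <;> simp [h, Prod.ext_iff]
  right_inv p := by by_cases h : p.2 = 1 <;> simp [h, Prod.ext_iff]

section FiberShift

variable {ι : Type*}

def fiberShift : Multiplicative (ι → ℤ) →* Equiv.Perm (ℤ × ι) where
  toFun f :=
    { toFun p := (p.1 + f.toAdd p.2, p.2)
      invFun p := (p.1 - f.toAdd p.2, p.2)
      left_inv p := by simp
      right_inv p := by simp }
  map_one' := by ext <;> simp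
  map_mul' f g := Equiv.ext fun p => Prod.ext (by simp; abel) rfl

@[simp]
theorem fiberShift_apply (f : Multiplicative (ι → ℤ)) (p : ℤ × ι) :
    fiberShift f p = (p.1 + f.toAdd p.2, p.2) :=
  rfl

theorem fiberShift_injective : Function.Injective (fiberShift (ι := ι)) := fun f g hfg =>
  Multiplicative.toAdd.injective <| funext fun i => by
    simpa using congrArg (fun σ : Equiv.Perm (ℤ × ι) => (σ (0, i)).1) hfg

theorem Multiplicative.closure_range_ofAdd_single [Fintype ι] [DecidableEq ι] :
    Subgroup.closure (Set.range fun i : ι => Multiplicative.ofAdd (Pi.single i (1 : ℤ))) = ⊤ := by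
  refine (Subgroup.eq_top_iff' _).mpr fun f => ?_
  have hf : f = ∏ i, Multiplicative.ofAdd (Pi.single i (1 : ℤ)) ^ f.toAdd i := by
    apply Multiplicative.toAdd.injective
    simp [toAdd_prod, ← Pi.single_smul, Finset.univ_sum_single]
  rw [hf]
  exact Subgroup.prod_mem _ fun i _ => zpow_mem (Subgroup.subset_closure (Set.mem_range_self i)) _

theorem closure_range_fiberShift_single [Fintype ι] [DecidableEq ι] :
    Subgroup.closure (Set.range fun i : ι => fiberShift (.ofAdd (Pi.single i 1))) =
      fiberShift.range := by
  rw [MonoidHom.range_eq_map, ← Multiplicative.closure_range_ofAdd_single, MonoidHom.map_closure,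
    ← Set.range_comp]
  rfl

end FiberShift

theorem ZMod.eq_zero_or_eq_one_of_two (i : ZMod 2) : i = 0 ∨ i = 1 := by
  revert i
  decide

theorem alpha_eq_fiberShift : alpha = fiberShift (.ofAdd (Pi.single 0 1)) := by
  ext ⟨x, i⟩ <;> obtain rfl | rfl := i.eq_zero_or_eq_one_of_two <;> simp [alpha]

theorem beta_eq_fiberShift : beta = fiberShift (.ofAdd (Pi.single 1 1)) := by
  ext ⟨x, i⟩ <;> obtain rfl | rfl := i.eq_zero_or_eq_one_of_two <;> simp [beta]

theorem closure_alpha_beta : Subgroup.closure {alpha, beta} = (fiberShift (ι := ZMod 2)).range := by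
  rw [← closure_range_fiberShift_single, alpha_eq_fiberShift, beta_eq_fiberShift]
  congr 1
  ext σ
  constructor
  · rintro (rfl | rfl)
    exacts [⟨0, rfl⟩, ⟨1, rfl⟩]
  · rintro ⟨i, rfl⟩
    obtain rfl | rfl := i.eq_zero_or_eq_one_of_two <;> simp

-- `ZMod 2` is `Fin 2` by definition.
def multiplicativeZModTwoArrowEquiv :
    Multiplicative (ZMod 2 → ℤ) ≃* Multiplicative ℤ × Multiplicative ℤ :=
  (AddEquiv.toMultiplicative (LinearEquiv.finTwoArrow ℤ ℤ).toAddEquiv).trans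
    (MulEquiv.prodMultiplicative ℤ ℤ)

/-- The subgroup of permutations of `ℤ × ZMod 2` generated by `alpha` and `beta`
is isomorphic to `ℤ × ℤ`. -/
theorem stmt13 :
    Nonempty
      ((Subgroup.closure {alpha, beta} : Subgroup (Equiv.Perm (ℤ × ZMod 2))) ≃*
        (Multiplicative ℤ × Multiplicative ℤ)) :=
  ⟨(MulEquiv.subgroupCongr closure_alpha_beta).trans
    ((MonoidHom.ofInjective fiberShift_injective).symm.trans multiplicativeZModTwoArrowEquiv)⟩
end

section
/- Let α, β, γ be the permutations of ℤ × ZMod 2 given by α (x, y) = (x + 1, y) if y = 0 and (x, y) otherwise; β (x, y) = (x + 1, y) if y = 1 and (x, y) otherwise; γ (x, y) = (x, y + 1). Then the subgroup of Equiv.Perm (ℤ × ZMod 2) generated by {α, β, γ} is isomorphic to the presented group ⟨a, b, c ∣ c² = 1, a·b = b·a, c·a = b·c⟩, i.e. the PresentedGroup on three generators with relator set {c·c, a·b·a⁻¹·b⁻¹, c·a·c⁻¹·b⁻¹} in FreeGroup (Fin 3); in particular this group is a semidirect product (ℤ × ℤ) ⋊ (ZMod 2), where the nontrivial element of ZMod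 2 acts on ℤ × ℤ by swapping the two coordinates. -/
/-- The permutation `c` of the graph `Ω`: swap the two lines. -/
def gamma : Equiv.Perm (ℤ × ZMod 2) where
  toFun p := (p.1, p.2 + 1)
  invFun p := (p.1, p.2 - 1)
  left_inv p := by simp
  right_inv p := by simp

/-- The relators `c² = 1`, `ab = ba`, `ca = bc` on the generators `a, b, c`. -/
def omegaRels : Set (FreeGroup (Fin 3)) :=
  { FreeGroup.of 2 * FreeGroup.of 2,
    FreeGroup.of 0 * FreeGroup.of 1 * (FreeGroup.of 0)⁻¹ * (FreeGroup.of 1)⁻¹,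
    FreeGroup.of 2 * FreeGroup.of 0 * (FreeGroup.of 2)⁻¹ * (FreeGroup.of 1)⁻¹ }

open Multiplicative SemidirectProduct

section ZModPowersHom

variable {G : Type*} [Group G] {n : ℕ} [NeZero n]

def zmodPowersHom (g : G) (hg : g ^ n = 1) : Multiplicative (ZMod n) →* G where
  toFun ε := g ^ ε.toAdd.val
  map_one' := by simp
  map_mul' ε δ := by rw [toAdd_mul, ZMod.val_add, ← pow_eq_pow_mod _ hg, pow_add]

lemma zmodPowersHom_ofAdd_one (g : G) (hg : g ^ n = 1) :
    zmodPowersHom g hg (ofAdd 1) = g := by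
  change g ^ (1 : ZMod n).val = g
  rw [ZMod.val_one_eq_one_mod, ← pow_eq_pow_mod _ hg, pow_one]

end ZModPowersHom

lemma ZMod.eq_zero_or_eq_one (y : ZMod 2) : y = 0 ∨ y = 1 := by
  revert y; decide

lemma Multiplicative.eq_one_or_eq_ofAdd_one (ε : Multiplicative (ZMod 2)) :
    ε = 1 ∨ ε = ofAdd 1 :=
  ε.toAdd.eq_zero_or_eq_one

lemma forall_omegaRels_lift_eq_one_iff {H : Type*} [Group H] (f : Fin 3 → H) :
    (∀ r ∈ omegaRels, FreeGroup.lift f r = 1) ↔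
      f 2 * f 2 = 1 ∧ f 0 * f 1 = f 1 * f 0 ∧ f 2 * f 0 = f 1 * f 2 := by
  simp only [omegaRels, Set.mem_insert_iff, Set.mem_singleton_iff, forall_eq_or_imp, forall_eq,
    map_mul, map_inv, FreeGroup.lift_apply_of, mul_inv_eq_iff_eq_mul, one_mul]

lemma PresentedGroup.lift_of_eq_one_of_mem {α : Type*} {rels : Set (FreeGroup α)}
    {r : FreeGroup α} (hr : r ∈ rels) : FreeGroup.lift (of : α → PresentedGroup rels) r = 1 :=
  (FreeGroup.lift_unique (mk rels) fun _ => rfl).symm.trans (one_of_mem hr)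

def swapAction : Multiplicative (ZMod 2) →* MulAut (Multiplicative (ℤ × ℤ)) :=
  zmodPowersHom (AddEquiv.toMultiplicative AddEquiv.prodComm) (by ext <;> rfl)

lemma swapAction_ofAdd_one :
    swapAction (ofAdd 1) = AddEquiv.toMultiplicative (AddEquiv.prodComm : ℤ × ℤ ≃+ ℤ × ℤ) :=
  zmodPowersHom_ofAdd_one _ _

abbrev IntWreathTwo := Multiplicative (ℤ × ℤ) ⋊[swapAction] Multiplicative (ZMod 2)

namespace IntWreathTwo

def a : IntWreathTwo := inl (ofAdd (1, 0) : Multiplicative (ℤ × ℤ))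
def b : IntWreathTwo := inl (ofAdd (0, 1) : Multiplicative (ℤ × ℤ))
def c : IntWreathTwo := inr (ofAdd 1)

lemma c_mul_c : c * c = 1 := by
  rw [c, ← map_mul, ← ofAdd_add, show (1 + 1 : ZMod 2) = 0 from rfl, ofAdd_zero, map_one]

lemma a_mul_b : a * b = b * a :=
  ((Commute.all _ _).map inl).eq

lemma c_mul_a : c * a = b * c := by
  rw [← mul_inv_eq_iff_eq_mul, c, a, b, ← map_inv, ← inl_aut, swapAction_ofAdd_one]
  rfl

lemma inl_eq_a_zpow_mul_b_zpow (v : Multiplicative (ℤ × ℤ)) :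
    (inl v : IntWreathTwo) = a ^ v.toAdd.1 * b ^ v.toAdd.2 := by
  rw [a, b, ← map_zpow inl, ← map_zpow inl, ← map_mul inl]
  congr 1
  apply toAdd.injective
  ext <;> simp

lemma closure_abc : Subgroup.closure {a, b, c} = ⊤ := by
  refine eq_top_iff.2 fun g _ => ?_
  have mem : ∀ {h}, h ∈ ({a, b, c} : Set IntWreathTwo) → h ∈ Subgroup.closure {a, b, c} :=
    fun h => Subgroup.subset_closure h
  rw [← inl_left_mul_inr_right g, inl_eq_a_zpow_mul_b_zpow]
  refine mul_mem (mul_mem (zpow_mem (mem (by simp)) _) (zpow_mem (mem (by simp)) _)) ?_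
  rcases g.right.eq_one_or_eq_ofAdd_one with h | h <;> rw [h]
  · rw [map_one]; exact one_mem _
  · exact mem (by simp [c])

section Lift

variable {H : Type*} [Group H] {x y z : H}

def lift (hz : z * z = 1) (hxy : x * y = y * x) (hzx : z * x = y * z) : IntWreathTwo →* H :=
  SemidirectProduct.lift
    { toFun := fun v => x ^ v.toAdd.1 * y ^ v.toAdd.2
      map_one' := by simp
      map_mul' := fun v w => by
        simp only [toAdd_mul, Prod.fst_add, Prod.snd_add, zpow_add]
        exact (Commute.zpow_zpow (hxy : Commute x y) _ _).mul_mul_mul_comm _ _ }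
    (zmodPowersHom z (by rwa [sq]))
    (fun ε => by
      rcases ε.eq_one_or_eq_ofAdd_one with rfl | rfl
      · ext v; simp
      · have hzy : SemiconjBy z y x :=
          calc z * y = z * (y * z) * z := by rw [mul_assoc, mul_assoc, hz, mul_one]
            _ = x * z := by rw [← hzx, ← mul_assoc, hz, one_mul]
        refine MonoidHom.ext fun v => ?_
        simp only [MonoidHom.comp_apply, MulEquiv.coe_toMonoidHom, swapAction_ofAdd_one,
          zmodPowersHom_ofAdd_one, MulAut.conj_apply, MonoidHom.coe_mk, OneHom.coe_mk]
        change x ^ v.toAdd.2 * y ^ v.toAdd.1 = z * (x ^ v.toAdd.1 * y ^ v.toAdd.2) * z⁻¹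
        rw [eq_mul_inv_iff_mul_eq, (Commute.zpow_zpow (hxy : Commute x y) _ _).eq]
        exact ((SemiconjBy.zpow_right hzx _).mul_right (hzy.zpow_right _)).eq.symm)

variable (hz : z * z = 1) (hxy : x * y = y * x) (hzx : z * x = y * z)

lemma lift_a : lift hz hxy hzx a = x := by simp [lift, a]

lemma lift_b : lift hz hxy hzx b = y := by simp [lift, b]

lemma lift_c : lift hz hxy hzx c = z := by simp [lift, c, zmodPowersHom_ofAdd_one]

end Lift

def shift (v : ℤ × ℤ) (i : ZMod 2) : ℤ := if i = 0 then v.1 else v.2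

lemma shift_add (v w : ℤ × ℤ) (i : ZMod 2) : shift (v + w) i = shift v i + shift w i := by
  unfold shift; split_ifs <;> rfl

lemma shift_swapAction (ε : Multiplicative (ZMod 2)) (v : Multiplicative (ℤ × ℤ)) (i : ZMod 2) :
    shift (swapAction ε v).toAdd i = shift v.toAdd (i + ε.toAdd) := by
  rcases ε.eq_one_or_eq_ofAdd_one with rfl | rfl
  · simp
  · rw [swapAction_ofAdd_one]
    fin_cases i <;> rfl

instance : MulAction IntWreathTwo (ℤ × ZMod 2) where
  smul g p := (p.1 + shift g.left.toAdd (p.2 + g.right.toAdd), p.2 + g.right.toAdd)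
  one_smul p := by simp [HSMul.hSMul, shift]
  mul_smul g h p := by
    have hright :
        p.2 + (g.right.toAdd + h.right.toAdd) + g.right.toAdd = p.2 + h.right.toAdd := by
      rw [add_right_comm, add_assoc, ← add_assoc g.right.toAdd, CharTwo.add_self_eq_zero,
        zero_add]
    simp only [HSMul.hSMul, mul_left, mul_right, toAdd_mul, shift_add, shift_swapAction, hright]
    rw [show p.2 + h.right.toAdd + g.right.toAdd = p.2 + (g.right.toAdd + h.right.toAdd) by ring]
    ext
    · ring
    · rfl

lemma smul_def (g : IntWreathTwo) (p : ℤ × ZMod 2) :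
    g • p = (p.1 + shift g.left.toAdd (p.2 + g.right.toAdd), p.2 + g.right.toAdd) := rfl

instance : FaithfulSMul IntWreathTwo (ℤ × ZMod 2) where
  eq_of_smul_eq_smul {g h} hgh := by
    have hright : g.right = h.right :=
      toAdd.injective (by simpa [smul_def] using congrArg Prod.snd (hgh (0, 0)))
    have hshift (i : ZMod 2) : shift g.left.toAdd i = shift h.left.toAdd i := by
      simpa [smul_def, hright] using congrArg Prod.fst (hgh (0, i - h.right.toAdd))
    refine SemidirectProduct.ext (toAdd.injective (Prod.ext ?_ ?_)) hright
    · simpa [shift] using hshift 0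
    · simpa [shift] using hshift 1

lemma toPerm_a : (MulAction.toPerm a : Equiv.Perm (ℤ × ZMod 2)) = alpha :=
  Equiv.ext fun ⟨x, y⟩ => by
    rcases y.eq_zero_or_eq_one with rfl | rfl <;> simp [smul_def, shift, a, alpha]

lemma toPerm_b : (MulAction.toPerm b : Equiv.Perm (ℤ × ZMod 2)) = beta :=
  Equiv.ext fun ⟨x, y⟩ => by
    rcases y.eq_zero_or_eq_one with rfl | rfl <;> simp [smul_def, shift, b, beta]

lemma toPerm_c : (MulAction.toPerm c : Equiv.Perm (ℤ × ZMod 2)) = gamma :=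
  Equiv.ext fun ⟨x, y⟩ => by
    rcases y.eq_zero_or_eq_one with rfl | rfl <;>
      simp [smul_def, shift, c, gamma, CharTwo.add_self_eq_zero]

lemma range_toPermHom :
    (MulAction.toPermHom IntWreathTwo (ℤ × ZMod 2)).range =
      Subgroup.closure {alpha, beta, gamma} := by
  rw [MonoidHom.range_eq_map, ← closure_abc, MonoidHom.map_closure, Set.image_insert_eq,
    Set.image_insert_eq, Set.image_singleton, MulAction.coe_toPermHom, toPerm_a, toPerm_b,
    toPerm_c]

noncomputable def transitionGroupEquiv :
    Subgroup.closure {alpha, beta, gamma} ≃* IntWreathTwo :=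
  (MulEquiv.subgroupCongr range_toPermHom.symm).trans
    (MonoidHom.ofInjective MulAction.toPerm_injective).symm


def ofPresentedGroup : PresentedGroup omegaRels →* IntWreathTwo :=
  PresentedGroup.toGroup
    ((forall_omegaRels_lift_eq_one_iff ![a, b, c]).2 ⟨c_mul_c, a_mul_b, c_mul_a⟩)

def toPresentedGroup : IntWreathTwo →* PresentedGroup omegaRels :=
  have h := (forall_omegaRels_lift_eq_one_iff PresentedGroup.of).1
    fun _ => PresentedGroup.lift_of_eq_one_of_mem
  lift h.1 h.2.1 h.2.2

def presentedGroupEquiv : PresentedGroup omegaRels ≃* IntWreathTwo :=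
  MonoidHom.toMulEquiv ofPresentedGroup toPresentedGroup
    (PresentedGroup.ext fun i => by
      fin_cases i <;> simp [ofPresentedGroup, toPresentedGroup, lift_a, lift_b, lift_c])
    (MonoidHom.eq_of_eqOn_dense closure_abc (by
      rintro _ (rfl | rfl | rfl) <;>
        simp [ofPresentedGroup, toPresentedGroup, lift_a, lift_b, lift_c]))

end IntWreathTwo

/-- The transition group of `Ω`, i.e. the subgroup of `Equiv.Perm (ℤ × ZMod 2)` generated by
`alpha, beta, gamma`, is isomorphic to `⟨a, b, c ∣ c² = 1, ab = ba, ca = bc⟩`; in particular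
it is a semidirect product `(ℤ × ℤ) ⋊ ZMod 2`, the nontrivial element of `ZMod 2` acting by
swapping the coordinates. -/
theorem stmt14 :
    Nonempty
      ((Subgroup.closure {alpha, beta, gamma} : Subgroup (Equiv.Perm (ℤ × ZMod 2))) ≃*
        PresentedGroup omegaRels) ∧
    ∃ φ : Multiplicative (ZMod 2) →* MulAut (Multiplicative (ℤ × ℤ)),
      φ (Multiplicative.ofAdd 1) =
        AddEquiv.toMultiplicative (AddEquiv.prodComm : ℤ × ℤ ≃+ ℤ × ℤ) ∧
      Nonempty
        ((Subgroup.closure {alpha, beta, gamma} : Subgroup (Equiv.Perm (ℤ × ZMod 2))) ≃*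
          (Multiplicative (ℤ × ℤ) ⋊[φ] Multiplicative (ZMod 2))) := by
  exact ⟨⟨IntWreathTwo.transitionGroupEquiv.trans IntWreathTwo.presentedGroupEquiv.symm⟩,
    swapAction, swapAction_ofAdd_one, ⟨IntWreathTwo.transitionGroupEquiv⟩⟩
end
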